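/- arXiv:1501.05531 — 6 statements merged into one kernel-verified Lean document; each statement's English description precedes it below -/
import Mathlib

section
/- Let ξ be an S-valued random variable on a filtered probability space (Ω, 𝒜, ℍ, ℙ̃) with S finite. Suppose E[h(ξ) | ℋ_T] = E[h(ξ) | ℋ_0] a.s. for every function h: S → ℝ. Then ℍ is immersed in ℍ ∨ σ(ξ): for every bounded ℋ_T-measurable ψ and every t ∈ [0,T], E[ψ | ℋ_t ∨ σ(ξ)] = E[ψ | ℋ_t] almost surely. -/
/-!
Write `𝒢 = ℋ_t ∨ σ(ξ)`. Every `𝒢`-measurable set is a union of pieces `A ∩ {ξ = i}` with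
`A ∈ ℋ_t`, so it suffices to check `∫_{A ∩ {ξ = i}} E[ψ | ℋ_t] = ∫_{A ∩ {ξ = i}} ψ`. With
`f = 1{ξ = i}`, the hypothesis and the tower property give `E[f | ℋ_T] = E[f | ℋ_t]`, and the
self-adjointness of conditional expectation moves `E[· | ℋ_t]` from `1_A ψ` onto `f`, where it
can be replaced by `E[f | ℋ_T]` and moved back onto the `ℋ_T`-measurable `1_A ψ`.
-/

open MeasureTheory

theorem Set.abs_indicator_le_abs {Ω : Type*} (A : Set Ω) (u : Ω → ℝ) (ω : Ω) :
    |A.indicator u ω| ≤ |u ω| := by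
  simpa only [Real.norm_eq_abs] using norm_indicator_le_norm_self (s := A) (f := u) (a := ω)

namespace MeasureTheory

variable {Ω : Type*} {m m₁ m₂ m0 : MeasurableSpace Ω} {μ : Measure Ω}

theorem integral_condExp_mul_eq_integral_mul_condExp [IsFiniteMeasure μ] (hm : m ≤ m0)
    {f g : Ω → ℝ} {Rf Rg : ℝ} (hf : Integrable f μ) (hg : Integrable g μ)
    (hf_bdd : ∀ᵐ ω ∂μ, |f ω| ≤ Rf) (hg_bdd : ∀ᵐ ω ∂μ, |g ω| ≤ Rg) :
    ∫ ω, μ[f | m] ω * g ω ∂μ = ∫ ω, f ω * μ[g | m] ω ∂μ := by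
  have hf_cond : ∀ᵐ ω ∂μ, ‖μ[f | m] ω‖ ≤ Rf := ae_bdd_abs_condExp_of_ae_bdd_abs hf_bdd
  have hg_cond : ∀ᵐ ω ∂μ, ‖μ[g | m] ω‖ ≤ Rg := ae_bdd_abs_condExp_of_ae_bdd_abs hg_bdd
  calc ∫ ω, μ[f | m] ω * g ω ∂μ = ∫ ω, μ[μ[f | m] * g | m] ω ∂μ := (integral_condExp hm).symm
    _ = ∫ ω, μ[f | m] ω * μ[g | m] ω ∂μ := integral_congr_ae <|
        condExp_stronglyMeasurable_mul_of_bound hm stronglyMeasurable_condExp hg Rf hf_cond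
    _ = ∫ ω, μ[μ[g | m] * f | m] ω ∂μ := by
        refine integral_congr_ae ?_
        filter_upwards [condExp_stronglyMeasurable_mul_of_bound hm stronglyMeasurable_condExp
          hf Rg hg_cond] with ω hω
        rw [hω, Pi.mul_apply, mul_comm]
    _ = ∫ ω, f ω * μ[g | m] ω ∂μ := by
        rw [integral_condExp hm]
        simp only [Pi.mul_apply, mul_comm]

theorem condExp_ae_eq_of_condExp_ae_eq_of_le_of_le [IsFiniteMeasure μ] {m₀ : MeasurableSpace Ω}
    (h₀₁ : m₀ ≤ m₁) (h₁₂ : m₁ ≤ m₂) (hm₂ : m₂ ≤ m0) {f : Ω → ℝ}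
    (hf : μ[f | m₂] =ᵐ[μ] μ[f | m₀]) : μ[f | m₂] =ᵐ[μ] μ[f | m₁] :=
  calc μ[f | m₂] =ᵐ[μ] μ[f | m₀] := hf
    _ = μ[μ[f | m₀] | m₁] :=
        (condExp_of_stronglyMeasurable (h₁₂.trans hm₂) (stronglyMeasurable_condExp.mono h₀₁)
          integrable_condExp).symm
    _ =ᵐ[μ] μ[μ[f | m₂] | m₁] := condExp_congr_ae hf.symm
    _ =ᵐ[μ] μ[f | m₁] := condExp_condExp_of_le h₁₂ hm₂

theorem integral_condExp_mul_of_condExp_ae_eq [IsFiniteMeasure μ] (h₁₂ : m₁ ≤ m₂)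
    (hm₂ : m₂ ≤ m0) {f g : Ω → ℝ} {Rf Rg : ℝ} (hf : Integrable f μ)
    (hf_bdd : ∀ᵐ ω ∂μ, |f ω| ≤ Rf) (hg : StronglyMeasurable[m₂] g)
    (hg_bdd : ∀ᵐ ω ∂μ, |g ω| ≤ Rg) (hf_cond : μ[f | m₂] =ᵐ[μ] μ[f | m₁]) :
    ∫ ω, μ[g | m₁] ω * f ω ∂μ = ∫ ω, g ω * f ω ∂μ := by
  have hg_int : Integrable g μ :=
    .of_bound (hg.mono hm₂).aestronglyMeasurable Rg (by simpa only [Real.norm_eq_abs] using hg_bdd)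
  calc ∫ ω, μ[g | m₁] ω * f ω ∂μ = ∫ ω, g ω * μ[f | m₁] ω ∂μ :=
        integral_condExp_mul_eq_integral_mul_condExp (h₁₂.trans hm₂) hg_int hf hg_bdd hf_bdd
    _ = ∫ ω, g ω * μ[f | m₂] ω ∂μ := by
        refine integral_congr_ae ?_
        filter_upwards [hf_cond] with ω hω
        rw [hω]
    _ = ∫ ω, μ[g | m₂] ω * f ω ∂μ :=
        (integral_condExp_mul_eq_integral_mul_condExp hm₂ hg_int hf hg_bdd hf_bdd).symm
    _ = ∫ ω, g ω * f ω ∂μ := by rw [condExp_of_stronglyMeasurable hm₂ hg hg_int]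

theorem exists_eq_iUnion_inter_preimage_of_measurableSet_sup_comap {S : Type*} (ξ : Ω → S)
    {s : Set Ω} (hs : MeasurableSet[m ⊔ MeasurableSpace.comap ξ ⊤] s) :
    ∃ A : S → Set Ω, (∀ i, MeasurableSet[m] (A i)) ∧ s = ⋃ i, A i ∩ ξ ⁻¹' {i} := by
  let : MeasurableSpace S := ⊤
  rw [← MeasurableSpace.comap_id (m := m), ← MeasurableSpace.comap_prodMk] at hs
  obtain ⟨P, hP, rfl⟩ := hs
  refine ⟨fun i ↦ (fun ω ↦ (ω, i)) ⁻¹' P, fun i ↦ measurable_prodMk_right hP, ?_⟩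
  ext ω
  simp

theorem ae_eq_condExp_sup_comap_of_forall_setIntegral_eq [IsFiniteMeasure μ] {S : Type*}
    [Countable S] (hm : m ≤ m0) {ξ : Ω → S} (hξ : MeasurableSpace.comap ξ ⊤ ≤ m0)
    {φ ψ : Ω → ℝ} (hφ : StronglyMeasurable[m] φ) (hφ_int : Integrable φ μ)
    (hψ_int : Integrable ψ μ)
    (h_eq : ∀ A, MeasurableSet[m] A → ∀ i,
      ∫ ω in A ∩ ξ ⁻¹' {i}, φ ω ∂μ = ∫ ω in A ∩ ξ ⁻¹' {i}, ψ ω ∂μ) :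
    φ =ᵐ[μ] μ[ψ | m ⊔ MeasurableSpace.comap ξ ⊤] := by
  have hφ_sup := hφ.mono (le_sup_left : m ≤ m ⊔ MeasurableSpace.comap ξ ⊤)
  refine ae_eq_condExp_of_forall_setIntegral_eq (sup_le hm hξ) hψ_int
    (fun _ _ _ ↦ hφ_int.integrableOn) (fun s hs _ ↦ ?_) hφ_sup.aestronglyMeasurable
  obtain ⟨A, hA, rfl⟩ := exists_eq_iUnion_inter_preimage_of_measurableSet_sup_comap ξ hs
  have h_meas i : MeasurableSet (A i ∩ ξ ⁻¹' {i}) :=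
    (hm _ (hA i)).inter (hξ _ ⟨{i}, trivial, rfl⟩)
  have h_disj : Pairwise (Function.onFun Disjoint fun i ↦ A i ∩ ξ ⁻¹' {i}) := fun i j hij ↦
    ((Set.disjoint_singleton.2 hij).preimage ξ).mono Set.inter_subset_right
      Set.inter_subset_right
  rw [integral_iUnion h_meas h_disj hφ_int.integrableOn,
    integral_iUnion h_meas h_disj hψ_int.integrableOn]
  exact tsum_congr fun i ↦ h_eq (A i) (hA i) i

theorem setIntegral_inter_eq_integral_indicator_mul_indicator_one {A B : Set Ω}
    (hA : MeasurableSet A) (hB : MeasurableSet B) (u : Ω → ℝ) :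
    ∫ ω in A ∩ B, u ω ∂μ = ∫ ω, A.indicator u ω * B.indicator 1 ω ∂μ := by
  rw [← integral_indicator (hA.inter hB)]
  congr 1 with ω
  by_cases hωA : ω ∈ A <;> by_cases hωB : ω ∈ B <;> simp [hωA, hωB]

end MeasureTheory

theorem immersion_of_initial_cond_general
    {Ω S : Type*} [Fintype S] {m0 : MeasurableSpace Ω}
    (μ : Measure Ω) [IsProbabilityMeasure μ]
    (ℍ : Filtration ℝ m0) (T : ℝ)
    (ξ : Ω → S) (hξ : MeasurableSpace.comap ξ ⊤ ≤ m0)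
    (hinit : ∀ h : S → ℝ,
      μ[(fun ω => h (ξ ω)) | ℍ T] =ᵐ[μ] μ[(fun ω => h (ξ ω)) | ℍ 0]) :
    ∀ ψ : Ω → ℝ, Measurable[ℍ T] ψ → (∃ C, ∀ ω, |ψ ω| ≤ C) →
      ∀ t ∈ Set.Icc (0:ℝ) T,
        μ[ψ | (ℍ t : MeasurableSpace Ω) ⊔ MeasurableSpace.comap ξ ⊤] =ᵐ[μ] μ[ψ | ℍ t] := by
  rintro ψ hψ ⟨C, hC⟩ t ⟨h0t, htT⟩
  have hψ_int : Integrable ψ μ := .of_bound (hψ.mono (ℍ.le T) le_rfl).aestronglyMeasurable C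
    (.of_forall fun ω ↦ (Real.norm_eq_abs _).trans_le (hC ω))
  refine (ae_eq_condExp_sup_comap_of_forall_setIntegral_eq (ℍ.le t) hξ stronglyMeasurable_condExp
    integrable_condExp hψ_int fun A hA i ↦ ?_).symm
  have hB : MeasurableSet (ξ ⁻¹' {i}) := hξ _ ⟨{i}, trivial, rfl⟩
  have hf : (ξ ⁻¹' {i}).indicator 1 = fun ω ↦ ({i} : Set S).indicator (1 : S → ℝ) (ξ ω) := rfl
  have hf_cond : μ[(ξ ⁻¹' {i}).indicator 1 | ℍ T] =ᵐ[μ] μ[(ξ ⁻¹' {i}).indicator 1 | ℍ t] :=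
    condExp_ae_eq_of_condExp_ae_eq_of_le_of_le (ℍ.mono h0t) (ℍ.mono htT) (ℍ.le T)
      (hf ▸ hinit _)
  rw [setIntegral_inter_eq_integral_indicator_mul_indicator_one (ℍ.le t _ hA) hB,
    setIntegral_inter_eq_integral_indicator_mul_indicator_one (ℍ.le t _ hA) hB]
  calc ∫ ω, A.indicator (μ[ψ | ℍ t]) ω * (ξ ⁻¹' {i}).indicator 1 ω ∂μ
      = ∫ ω, μ[A.indicator ψ | ℍ t] ω * (ξ ⁻¹' {i}).indicator 1 ω ∂μ := by
        refine integral_congr_ae ?_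
        filter_upwards [condExp_indicator hψ_int hA] with ω hω
        rw [hω]
    _ = ∫ ω, A.indicator ψ ω * (ξ ⁻¹' {i}).indicator 1 ω ∂μ :=
        integral_condExp_mul_of_condExp_ae_eq (ℍ.mono htT) (ℍ.le T)
          ((integrable_const 1).indicator hB)
          (.of_forall fun ω ↦ (Set.abs_indicator_le_abs _ 1 ω).trans_eq abs_one)
          (hψ.stronglyMeasurable.indicator (ℍ.mono htT _ hA))
          (.of_forall fun ω ↦ (Set.abs_indicator_le_abs A ψ ω).trans (hC ω)) hf_cond

/-- If an `S`-valued random variable `ξ` (with `S` finite) satisfies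
`E[h(ξ) | ℋ_T] = E[h(ξ) | ℋ_0]` a.s. for every `h : S → ℝ`, then `ℍ` is immersed in
`ℍ ∨ σ(ξ)`: for every bounded `ℋ_T`-measurable `ψ` and every `t ∈ [0,T]`,
`E[ψ | ℋ_t ∨ σ(ξ)] = E[ψ | ℋ_t]` almost surely. -/
theorem immersion_of_initial_cond
    {Ω S : Type*} [Fintype S] {m0 : MeasurableSpace Ω}
    (μ : Measure Ω) [IsProbabilityMeasure μ]
    (ℍ : Filtration ℝ m0) (T : ℝ) (hT : 0 < T)
    (ξ : Ω → S) (hξ : MeasurableSpace.comap ξ ⊤ ≤ m0)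
    (hinit : ∀ h : S → ℝ,
      μ[(fun ω => h (ξ ω)) | ℍ T] =ᵐ[μ] μ[(fun ω => h (ξ ω)) | ℍ 0]) :
    ∀ ψ : Ω → ℝ, Measurable[ℍ T] ψ → (∃ C, ∀ ω, |ψ ω| ≤ C) →
      ∀ t ∈ Set.Icc (0:ℝ) T,
        μ[ψ | (ℍ t : MeasurableSpace Ω) ⊔ MeasurableSpace.comap ξ ⊤] =ᵐ[μ] μ[ψ | ℍ t] :=
  immersion_of_initial_cond_general μ ℍ T ξ hξ hinit
end

section
/- Let ℍ and 𝕂 be independent filtrations on a probability space, and ξ an S-valued random variable such that E[h(ξ)|ℋ_T] = E[h(ξ)|ℋ_0] for all h: S → ℝ and 𝕂 is independent of ℍ ∨ σ(ξ). Then ℍ is immersed in ℍ ∨ 𝕂 ∨ σ(ξ): for all bounded ℋ_T-measurable ψ and t ∈ [0,T], E[ψ | ℋ_t ∨ 𝒦_t ∨ σ(ξ)] = E[ψ | ℋ_t] a.s. -/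
/-!
The join is built in two steps. Adjoining `σ(ξ)` to `ℋ_t` does not change the conditional
expectation of an `ℋ_T`-measurable `ψ`: by the hypothesis on `ξ` and the tower property,
`E[1_{ξ ∈ B} | ℋ_T]` is `ℋ_t`-measurable, so `∫_{H ∩ {ξ ∈ B}} ψ = ∫_H ψ E[1_{ξ ∈ B} | ℋ_t]` for
`H ∈ ℋ_t`, and the right side is unchanged when `ψ` is replaced by `E[ψ | ℋ_t]`. Adjoining `𝒦_t`
then changes nothing, because `𝒦_t` is independent of `ℋ_T ∨ σ(ξ)`, which contains `ψ` and its
projection, so integrals over `A ∩ K` factor as `ℙ(K) ∫_A`. In both steps it suffices to compare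
integrals over the π-system of intersections generating the join.
-/

open MeasureTheory ProbabilityTheory MeasurableSpace

section

variable {Ω : Type*}

lemma isPiSystem_image2_inter {p q : Set (Set Ω)} (hp : IsPiSystem p) (hq : IsPiSystem q) :
    IsPiSystem (Set.image2 (· ∩ ·) p q) := by
  rintro _ ⟨s, hs, t, ht, rfl⟩ _ ⟨s', hs', t', ht', rfl⟩ ⟨x, ⟨hxs, hxt⟩, hxs', hxt'⟩
  exact ⟨s ∩ s', hp s hs s' hs' ⟨x, hxs, hxs'⟩, t ∩ t', hq t ht t' ht' ⟨x, hxt, hxt'⟩,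
    Set.inter_inter_inter_comm s s' t t'⟩

lemma sup_eq_generateFrom_image2_inter (m₁ m₂ : MeasurableSpace Ω) :
    m₁ ⊔ m₂ = generateFrom
      (Set.image2 (· ∩ ·) {s | MeasurableSet[m₁] s} {t | MeasurableSet[m₂] t}) := by
  refine le_antisymm (sup_le ?_ ?_) (generateFrom_le ?_)
  · exact fun s hs ↦ measurableSet_generateFrom ⟨s, hs, Set.univ, .univ, Set.inter_univ s⟩
  · exact fun t ht ↦ measurableSet_generateFrom ⟨Set.univ, .univ, t, ht, Set.univ_inter t⟩
  · rintro _ ⟨s, hs, t, ht, rfl⟩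
    exact (le_sup_left (a := m₁) s hs).inter (le_sup_right (b := m₂) t ht)

section SetIntegral

variable {E : Type*} [NormedAddCommGroup E] [NormedSpace ℝ E]
  {m m0 : MeasurableSpace Ω} {μ : Measure Ω}

theorem setIntegral_eq_setIntegral_of_isPiSystem {s : Set (Set Ω)} (hm : m ≤ m0)
    (h_eq : m = generateFrom s) (h_inter : IsPiSystem s) {f g : Ω → E} (hf : Integrable f μ)
    (hg : Integrable g μ)
    (basic : ∀ t ∈ s, ∫ x in t, f x ∂μ = ∫ x in t, g x ∂μ)
    (h_univ : ∫ x, f x ∂μ = ∫ x, g x ∂μ) {t : Set Ω} (ht : MeasurableSet[m] t) :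
    ∫ x in t, f x ∂μ = ∫ x in t, g x ∂μ := by
  induction t, ht using induction_on_inter h_eq h_inter with
  | empty => simp
  | basic t ht => exact basic t ht
  | compl t ht h_t =>
    rw [setIntegral_compl (hm t ht) hf, setIntegral_compl (hm t ht) hg, h_t, h_univ]
  | iUnion t h_disj ht h_t =>
    rw [integral_iUnion (fun i ↦ hm _ (ht i)) h_disj hf.integrableOn,
      integral_iUnion (fun i ↦ hm _ (ht i)) h_disj hg.integrableOn]
    exact tsum_congr h_t

end SetIntegral

section CondExp

variable {m m₁ m₂ m₃ m0 : MeasurableSpace Ω} {μ : Measure Ω} {f : Ω → ℝ}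

theorem ae_eq_condExp_sup_of_setIntegral_inter_eq [IsFiniteMeasure μ] (h₁ : m₁ ≤ m0)
    (h₂ : m₂ ≤ m0) {g : Ω → ℝ} (hf : Integrable f μ) (hg : Integrable g μ)
    (hgm : StronglyMeasurable[m₁ ⊔ m₂] g)
    (h : ∀ s t, MeasurableSet[m₁] s → MeasurableSet[m₂] t →
      ∫ ω in s ∩ t, g ω ∂μ = ∫ ω in s ∩ t, f ω ∂μ) :
    g =ᵐ[μ] μ[f | m₁ ⊔ m₂] := by
  refine ae_eq_condExp_of_forall_setIntegral_eq (sup_le h₁ h₂) hf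
    (fun _ _ _ ↦ hg.integrableOn) (fun s hs _ ↦ ?_) hgm.aestronglyMeasurable
  refine setIntegral_eq_setIntegral_of_isPiSystem (sup_le h₁ h₂)
    (sup_eq_generateFrom_image2_inter m₁ m₂)
    (isPiSystem_image2_inter (@isPiSystem_measurableSet _ m₁) (@isPiSystem_measurableSet _ m₂))
    hg hf ?_ ?_ hs
  · rintro _ ⟨s, hs, t, ht, rfl⟩
    exact h s t hs ht
  · simpa using h Set.univ Set.univ .univ .univ

lemma condExp_ae_eq_of_le_of_le [IsFiniteMeasure μ] (h₀₁ : m ≤ m₁) (h₁₂ : m₁ ≤ m₂)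
    (h₂ : m₂ ≤ m0) (h : μ[f | m₂] =ᵐ[μ] μ[f | m]) : μ[f | m₂] =ᵐ[μ] μ[f | m₁] := by
  refine h.trans ?_
  calc μ[f | m] = μ[μ[f | m] | m₁] :=
        (condExp_of_stronglyMeasurable (h₁₂.trans h₂) (stronglyMeasurable_condExp.mono h₀₁)
          integrable_condExp).symm
    _ =ᵐ[μ] μ[μ[f | m₂] | m₁] := condExp_congr_ae h.symm
    _ =ᵐ[μ] μ[f | m₁] := condExp_condExp_of_le h₁₂ h₂

lemma MeasureTheory.Integrable.mul_condExp_indicator {X : Ω → ℝ} (hX : Integrable X μ)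
    (A : Set Ω) : Integrable (X * μ[A.indicator (1 : Ω → ℝ) | m]) μ := by
  refine hX.mul_bdd integrable_condExp.aestronglyMeasurable (c := 1) ?_
  simpa only [Real.norm_eq_abs] using
    ae_bdd_abs_condExp_of_ae_bdd_abs (R := 1) (f := A.indicator 1)
      (.of_forall fun ω ↦ by by_cases hω : ω ∈ A <;> simp [hω])

theorem setIntegral_inter_eq_setIntegral_mul_condExp_indicator [IsFiniteMeasure μ]
    (hm : m ≤ m0) {X : Ω → ℝ} (hX : Integrable X μ) (hXm : StronglyMeasurable[m] X) {s A : Set Ω}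
    (hs : MeasurableSet[m] s) (hA : MeasurableSet A) :
    ∫ ω in s ∩ A, X ω ∂μ = ∫ ω in s, (X * μ[A.indicator (1 : Ω → ℝ) | m]) ω ∂μ := by
  have h_ind : X * A.indicator (1 : Ω → ℝ) = A.indicator X := by
    ext ω; by_cases hω : ω ∈ A <;> simp [hω]
  calc ∫ ω in s ∩ A, X ω ∂μ = ∫ ω in s, μ[X * A.indicator (1 : Ω → ℝ) | m] ω ∂μ := by
        rw [setIntegral_condExp hm (h_ind ▸ hX.indicator hA) hs, h_ind, setIntegral_indicator hA]
    _ = ∫ ω in s, (X * μ[A.indicator (1 : Ω → ℝ) | m]) ω ∂μ :=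
        setIntegral_congr_ae (hm s hs) ((condExp_mul_of_stronglyMeasurable_left hXm
          (h_ind ▸ hX.indicator hA) ((integrable_const 1).indicator hA)).mono fun ω h _ ↦ h)

theorem setIntegral_condExp_mul [IsFiniteMeasure μ] (hm : m ≤ m0) {c : Ω → ℝ}
    (hc : StronglyMeasurable[m] c) (hfc : Integrable (f * c) μ) (hf : Integrable f μ)
    {s : Set Ω} (hs : MeasurableSet[m] s) :
    ∫ ω in s, (μ[f | m] * c) ω ∂μ = ∫ ω in s, (f * c) ω ∂μ := by
  rw [← setIntegral_condExp hm hfc hs]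
  exact setIntegral_congr_ae (hm s hs)
    ((condExp_mul_of_stronglyMeasurable_right hc hfc hf).mono fun ω h _ ↦ h.symm)

theorem setIntegral_inter_eq_measureReal_mul_of_indep (h₂ : m₂ ≤ m0) (h₃ : m₃ ≤ m0)
    (hind : Indep m₃ m₂ μ) {X : Ω → ℝ} (hXm : StronglyMeasurable[m₂] X) {s t : Set Ω}
    (hs : MeasurableSet[m₂] s) (ht : MeasurableSet[m₃] t) :
    ∫ ω in s ∩ t, X ω ∂μ = μ.real t * ∫ ω in s, X ω ∂μ := by
  have hsX : Measurable[m₂] (s.indicator X) := hXm.measurable.indicator hs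
  simpa only [id, setIntegral_indicator (h₂ s hs), integral_indicator (h₂ s hs),
    Set.inter_comm t s] using Indep.setIntegral_eq_mul (f := id) h₃
      (indep_of_indep_of_le_right hind hsX.comap_le) (hsX.mono h₂ le_rfl).aemeasurable ht
      aestronglyMeasurable_id

theorem condExp_sup_ae_eq_of_indep [IsFiniteMeasure μ] (h₁₂ : m₁ ≤ m₂) (h₂ : m₂ ≤ m0) (h₃ : m₃ ≤ m0)
    (hind : Indep m₃ m₂ μ) (hf : Integrable f μ) (hfm : StronglyMeasurable[m₂] f) :
    μ[f | m₁ ⊔ m₃] =ᵐ[μ] μ[f | m₁] := by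
  refine (ae_eq_condExp_sup_of_setIntegral_inter_eq (h₁₂.trans h₂) h₃ hf integrable_condExp
    (stronglyMeasurable_condExp.mono le_sup_left) fun s t hs ht ↦ ?_).symm
  rw [setIntegral_inter_eq_measureReal_mul_of_indep h₂ h₃ hind hfm (h₁₂ s hs) ht,
    setIntegral_inter_eq_measureReal_mul_of_indep h₂ h₃ hind
      (stronglyMeasurable_condExp.mono h₁₂) (h₁₂ s hs) ht,
    setIntegral_condExp (h₁₂.trans h₂) hf hs]

theorem condExp_sup_ae_eq_of_condExp_indicator_ae_eq [IsFiniteMeasure μ] (hmn : m ≤ m₂)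
    (h₂ : m₂ ≤ m0) (h₃ : m₃ ≤ m0)
    (h : ∀ A, MeasurableSet[m₃] A →
      μ[A.indicator (1 : Ω → ℝ) | m₂] =ᵐ[μ] μ[A.indicator (1 : Ω → ℝ) | m])
    (hf : Integrable f μ) (hfm : StronglyMeasurable[m₂] f) :
    μ[f | m ⊔ m₃] =ᵐ[μ] μ[f | m] := by
  refine (ae_eq_condExp_sup_of_setIntegral_inter_eq (hmn.trans h₂) h₃ hf integrable_condExp
    (stronglyMeasurable_condExp.mono le_sup_left) fun s A hs hA ↦ ?_).symm
  have hs₂ : MeasurableSet[m₂] s := hmn s hs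
  have h_swap : ∀ X : Ω → ℝ, ∫ ω in s, (X * μ[A.indicator (1 : Ω → ℝ) | m₂]) ω ∂μ =
      ∫ ω in s, (X * μ[A.indicator (1 : Ω → ℝ) | m]) ω ∂μ := fun X ↦
    setIntegral_congr_ae (h₂ s hs₂) ((h A hA).mono fun ω hω _ ↦ by simp only [Pi.mul_apply, hω])
  rw [setIntegral_inter_eq_setIntegral_mul_condExp_indicator h₂ integrable_condExp
      (stronglyMeasurable_condExp.mono hmn) hs₂ (h₃ A hA),
    setIntegral_inter_eq_setIntegral_mul_condExp_indicator h₂ hf hfm hs₂ (h₃ A hA),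
    h_swap, h_swap,
    setIntegral_condExp_mul (hmn.trans h₂) stronglyMeasurable_condExp
      (hf.mul_condExp_indicator A) hf hs]

end CondExp

end

theorem immersion_join_independent_general
    {Ω S : Type*} {m0 : MeasurableSpace Ω}
    (μ : Measure Ω) [IsProbabilityMeasure μ]
    (ℍ 𝕂 : Filtration ℝ m0) (T : ℝ)
    (ξ : Ω → S) (hξ : MeasurableSpace.comap ξ ⊤ ≤ m0)
    -- 𝕂 is independent of ℍ ∨ σ(ξ)
    (hindep : Indep (𝕂 T) ((ℍ T : MeasurableSpace Ω) ⊔ MeasurableSpace.comap ξ ⊤) μ)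
    (hinit : ∀ h : S → ℝ,
      μ[(fun ω => h (ξ ω)) | ℍ T] =ᵐ[μ] μ[(fun ω => h (ξ ω)) | ℍ 0]) :
    ∀ ψ : Ω → ℝ, Measurable[ℍ T] ψ → (∃ C, ∀ ω, |ψ ω| ≤ C) →
      ∀ t ∈ Set.Icc (0:ℝ) T,
        μ[ψ | (ℍ t : MeasurableSpace Ω) ⊔ 𝕂 t ⊔ MeasurableSpace.comap ξ ⊤]
          =ᵐ[μ] μ[ψ | ℍ t] := by
  intro ψ hψ ⟨C, hC⟩ t ht
  have hψint : Integrable ψ μ :=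
    .of_bound (hψ.mono (ℍ.le T) le_rfl).aestronglyMeasurable C (.of_forall hC)
  have hHt : (ℍ t : MeasurableSpace Ω) ≤ ℍ T := ℍ.mono ht.2
  have hξ_law : ∀ A, MeasurableSet[MeasurableSpace.comap ξ ⊤] A →
      μ[A.indicator (1 : Ω → ℝ) | ℍ T] =ᵐ[μ] μ[A.indicator 1 | ℍ t] := by
    rintro _ ⟨B, -, rfl⟩
    exact condExp_ae_eq_of_le_of_le (ℍ.mono ht.1) hHt (ℍ.le T) (hinit (B.indicator 1))
  calc μ[ψ | (ℍ t : MeasurableSpace Ω) ⊔ 𝕂 t ⊔ MeasurableSpace.comap ξ ⊤]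
      = μ[ψ | (ℍ t : MeasurableSpace Ω) ⊔ MeasurableSpace.comap ξ ⊤ ⊔ 𝕂 t] := by
        rw [sup_right_comm]
    _ =ᵐ[μ] μ[ψ | (ℍ t : MeasurableSpace Ω) ⊔ MeasurableSpace.comap ξ ⊤] :=
        condExp_sup_ae_eq_of_indep (sup_le_sup_right hHt _) (sup_le (ℍ.le T) hξ) (𝕂.le t)
          (indep_of_indep_of_le_left hindep (𝕂.mono ht.2)) hψint
          (hψ.stronglyMeasurable.mono le_sup_left)
    _ =ᵐ[μ] μ[ψ | ℍ t] :=
        condExp_sup_ae_eq_of_condExp_indicator_ae_eq hHt (ℍ.le T) hξ hξ_law hψint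
          hψ.stronglyMeasurable

/-- Let `ℍ` and `𝕂` be filtrations with `𝕂` independent of `ℍ ∨ σ(ξ)`, and let `ξ` be an
`S`-valued random variable (`S` finite) with `E[h(ξ)|ℋ_T] = E[h(ξ)|ℋ_0]` a.s. for all
`h : S → ℝ`. Then `ℍ` is immersed in `ℍ ∨ 𝕂 ∨ σ(ξ)`: for all bounded `ℋ_T`-measurable `ψ`
and `t ∈ [0,T]`, `E[ψ | ℋ_t ∨ 𝒦_t ∨ σ(ξ)] = E[ψ | ℋ_t]` a.s. -/
theorem immersion_join_independent
    {Ω S : Type*} [Fintype S] {m0 : MeasurableSpace Ω}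
    (μ : Measure Ω) [IsProbabilityMeasure μ]
    (ℍ 𝕂 : Filtration ℝ m0) (T : ℝ) (hT : 0 < T)
    (ξ : Ω → S) (hξ : MeasurableSpace.comap ξ ⊤ ≤ m0)
    -- 𝕂 is independent of ℍ ∨ σ(ξ)
    (hindep : Indep (𝕂 T) ((ℍ T : MeasurableSpace Ω) ⊔ MeasurableSpace.comap ξ ⊤) μ)
    (hinit : ∀ h : S → ℝ,
      μ[(fun ω => h (ξ ω)) | ℍ T] =ᵐ[μ] μ[(fun ω => h (ξ ω)) | ℍ 0]) :
    ∀ ψ : Ω → ℝ, Measurable[ℍ T] ψ → (∃ C, ∀ ω, |ψ ω| ≤ C) →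
      ∀ t ∈ Set.Icc (0:ℝ) T,
        μ[ψ | (ℍ t : MeasurableSpace Ω) ⊔ 𝕂 t ⊔ MeasurableSpace.comap ξ ⊤]
          =ᵐ[μ] μ[ψ | ℍ t] :=
  immersion_join_independent_general μ ℍ 𝕂 T ξ hξ hindep hinit
end

section
/- Let X be an (𝔽,𝔾)-doubly stochastic Markov chain, i.e. ℙ(X_t = y | ℱ_T ∨ 𝒢_s) = ℙ(X_t = y | ℱ_t ∨ σ(X_s)) for all 0 ≤ s ≤ t ≤ T and y ∈ S. Define p_{xy}(s,t) = ℙ(X_t = y, X_s = x | ℱ_t)/ℙ(X_s = x | ℱ_t) on {ℙ(X_s = x | ℱ_t) > 0} and 1_{x=y} otherwise. Then for all 0 ≤ s ≤ t ≤ T and y ∈ S, ℙ(X_t = y | ℱ_T ∨ 𝒢_s) = ∑_{x∈S} 1_{X_s = x} p_{xy}(s,t) almost surely. -/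
/-! An event of `ℱ_t ∨ σ(X_s)` is fiberwise an `ℱ_t`-event: it is `{ω | ω ∈ B (X_s ω)}` for
some `ℱ_t`-measurable sets `B x`. Integrating over `B x ∩ {X_s = x}` and pulling the
`ℱ_t`-measurable factor `p_{xy}(s,t)` out of `ℙ(· | ℱ_t)` shows that `∑_x 1_{X_s = x} p_{xy}(s,t)`
is `ℙ(X_t = y | ℱ_t ∨ σ(X_s))`, because `p_{xy}(s,t) ℙ(X_s = x | ℱ_t) = ℙ(X_t = y, X_s = x | ℱ_t)`
almost surely (the right side vanishes where `ℙ(X_s = x | ℱ_t)` does). The doubly stochastic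
Markov property replaces `ℱ_t ∨ σ(X_s)` by `ℱ_T ∨ 𝒢_s`. -/

open MeasureTheory ProbabilityTheory

variable {Ω : Type*}

/-- The real-valued indicator of the event `{X t = y}`. -/
def ind {d : ℕ} (X : ℝ → Ω → Fin d) (t : ℝ) (y : Fin d) : Ω → ℝ :=
  fun ω => if X t ω = y then 1 else 0

/-- `X` is an `(𝔽,𝔾)`-doubly stochastic Markov chain on `[0,T]`:
`ℙ(X_t = y | ℱ_T ∨ 𝒢_s) = ℙ(X_t = y | ℱ_t ∨ σ(X_s))` for `0 ≤ s ≤ t ≤ T`. -/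
def IsDSMC {m0 : MeasurableSpace Ω} (μ : Measure Ω) (ℱ 𝒢 : Filtration ℝ m0) (T : ℝ)
    {d : ℕ} (X : ℝ → Ω → Fin d) : Prop :=
  ∀ s t : ℝ, 0 ≤ s → s ≤ t → t ≤ T → ∀ y : Fin d,
    μ[ind X t y | (ℱ T : MeasurableSpace Ω) ⊔ 𝒢 s]
      =ᵐ[μ] μ[ind X t y | (ℱ t : MeasurableSpace Ω) ⊔ MeasurableSpace.comap (X s) ⊤]

/-- The conditional transition probability field `p_{xy}(s,t)` of `X`:
`ℙ(X_t = y, X_s = x | ℱ_t)/ℙ(X_s = x | ℱ_t)` on `{ℙ(X_s = x | ℱ_t) > 0}` and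
`1_{x = y}` otherwise. -/
noncomputable def ctf {m0 : MeasurableSpace Ω} (μ : Measure Ω) (ℱ : Filtration ℝ m0)
    {d : ℕ} (X : ℝ → Ω → Fin d) (s t : ℝ) (x y : Fin d) (ω : Ω) : ℝ :=
  if 0 < condExp (ℱ t) μ (ind X s x) ω then
    condExp (ℱ t) μ (fun ω' => ind X t y ω' * ind X s x ω') ω / condExp (ℱ t) μ (ind X s x) ω
  else if x = y then 1 else 0

section Fiberwise

variable {S : Type*}

theorem exists_fiberwise_of_measurableSet_sup_comap {m : MeasurableSpace Ω} {Y : Ω → S}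
    {A : Set Ω} (hA : MeasurableSet[m ⊔ MeasurableSpace.comap Y ⊤] A) :
    ∃ B : S → Set Ω, (∀ x, MeasurableSet[m] (B x)) ∧ A = {ω | ω ∈ B (Y ω)} := by
  -- The fiberwise sets form a σ-algebra containing both `m` and `σ(Y)`.
  let fiberwise : MeasurableSpace Ω :=
    { MeasurableSet' := fun A =>
        ∃ B : S → Set Ω, (∀ x, MeasurableSet[m] (B x)) ∧ A = {ω | ω ∈ B (Y ω)}
      measurableSet_empty := ⟨fun _ => ∅, fun _ => .empty, rfl⟩
      measurableSet_compl := by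
        rintro _ ⟨B, hB, rfl⟩
        exact ⟨fun x => (B x)ᶜ, fun x => (hB x).compl, rfl⟩
      measurableSet_iUnion := by
        intro A hA
        choose B hB hAB using hA
        refine ⟨fun x => ⋃ n, B n x, fun x => .iUnion fun n => hB n x, ?_⟩
        ext ω
        simp [hAB] }
  have hm : m ≤ fiberwise := fun A hA => ⟨fun _ => A, fun _ => hA, rfl⟩
  have hY : MeasurableSpace.comap Y ⊤ ≤ fiberwise := by
    classical
    rintro _ ⟨E, -, rfl⟩
    refine ⟨fun x => if x ∈ E then Set.univ else ∅, fun x => ?_, ?_⟩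
    · by_cases hx : x ∈ E <;> simp [hx]
    · ext ω
      by_cases h : Y ω ∈ E <;> simp [h]
  exact sup_le hm hY A hA

theorem indicator_fiber_eq_mul (Y : Ω → S) (q : S → Ω → ℝ) (x : S) :
    (Y ⁻¹' {x}).indicator (fun ω => q (Y ω) ω) = q x * (Y ⁻¹' {x}).indicator 1 := by
  funext ω
  by_cases h : Y ω = x <;> simp [h]

variable [Fintype S]

theorem fun_eq_sum_indicator_fiber {E : Type*} [AddCommMonoid E] (Y : Ω → S) (g : S → Ω → E) :
    (fun ω => g (Y ω) ω) = ∑ x, (Y ⁻¹' {x}).indicator (g x) := by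
  funext ω
  rw [Finset.sum_apply, Finset.sum_eq_single (Y ω) (fun x _ hx => by simp [Ne.symm hx])
    (by simp)]
  simp

variable {m m0 : MeasurableSpace Ω} {μ : Measure Ω} {Y : Ω → S}

theorem setIntegral_fiberwise (hY : ∀ x, MeasurableSet (Y ⁻¹' {x})) {B : S → Set Ω}
    (hB : ∀ x, MeasurableSet (B x)) {g : Ω → ℝ} (hg : Integrable g μ) :
    ∫ ω in {ω | ω ∈ B (Y ω)}, g ω ∂μ = ∑ x, ∫ ω in B x, (Y ⁻¹' {x}).indicator g ω ∂μ := by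
  have hA : {ω | ω ∈ B (Y ω)} = ⋃ x, B x ∩ Y ⁻¹' {x} := by ext; simp
  have hdisj : Pairwise (Function.onFun Disjoint fun x => B x ∩ Y ⁻¹' {x}) :=
    fun x x' hxx' => Set.disjoint_left.2 fun _ h h' => hxx' (h.2.symm.trans h'.2)
  rw [hA, integral_iUnion_fintype (fun x => (hB x).inter (hY x)) hdisj
    fun _ => hg.integrableOn]
  simp_rw [setIntegral_indicator (hY _)]

theorem condExp_sup_comap_ae_eq [IsFiniteMeasure μ] (hm : m ≤ m0)
    (hY : ∀ x, MeasurableSet (Y ⁻¹' {x})) {f : Ω → ℝ} (hf : Integrable f μ)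
    {q : S → Ω → ℝ} (hq_meas : ∀ x, StronglyMeasurable[m] (q x))
    (hq_int : ∀ x, Integrable (q x) μ)
    (hq : ∀ x, q x * μ[(Y ⁻¹' {x}).indicator 1 | m] =ᵐ[μ] μ[(Y ⁻¹' {x}).indicator f | m]) :
    μ[f | m ⊔ MeasurableSpace.comap Y ⊤] =ᵐ[μ] fun ω => q (Y ω) ω := by
  have hY_le : MeasurableSpace.comap Y ⊤ ≤ m0 := by
    rintro _ ⟨E, -, rfl⟩
    rw [← Set.biUnion_preimage_singleton]
    exact .biUnion E.to_countable fun x _ => hY x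
  have hg_meas : StronglyMeasurable[m ⊔ MeasurableSpace.comap Y ⊤] fun ω => q (Y ω) ω := by
    rw [fun_eq_sum_indicator_fiber]
    exact Finset.stronglyMeasurable_sum _ fun x _ =>
      ((hq_meas x).mono le_sup_left).indicator
        (le_sup_right (a := m) (b := MeasurableSpace.comap Y ⊤) _
          ⟨{x}, MeasurableSpace.measurableSet_top, rfl⟩)
  have hg_int : Integrable (fun ω => q (Y ω) ω) μ := by
    rw [fun_eq_sum_indicator_fiber]
    exact integrable_finsetSum' _ fun x _ => (hq_int x).indicator (hY x)
  refine (ae_eq_condExp_of_forall_setIntegral_eq (sup_le hm hY_le) hf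
    (fun _ _ _ => hg_int.integrableOn) (fun A hA _ => ?_) hg_meas.aestronglyMeasurable).symm
  obtain ⟨B, hB, rfl⟩ := exists_fiberwise_of_measurableSet_sup_comap hA
  rw [setIntegral_fiberwise hY (fun x => hm _ (hB x)) hg_int,
    setIntegral_fiberwise hY (fun x => hm _ (hB x)) hf]
  refine Finset.sum_congr rfl fun x _ => ?_
  have hfiber_int : Integrable ((Y ⁻¹' {x}).indicator (1 : Ω → ℝ)) μ :=
    (integrable_const 1).indicator (hY x)
  have hqfiber_int : Integrable (q x * (Y ⁻¹' {x}).indicator 1) μ := by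
    rw [← indicator_fiber_eq_mul]
    exact hg_int.indicator (hY x)
  rw [indicator_fiber_eq_mul]
  calc ∫ ω in B x, (q x * (Y ⁻¹' {x}).indicator 1 : Ω → ℝ) ω ∂μ
      = ∫ ω in B x, μ[q x * (Y ⁻¹' {x}).indicator 1 | m] ω ∂μ :=
        (setIntegral_condExp hm hqfiber_int (hB x)).symm
    _ = ∫ ω in B x, (q x * μ[(Y ⁻¹' {x}).indicator 1 | m] : Ω → ℝ) ω ∂μ :=
        setIntegral_congr_ae (hm _ (hB x)) <|
          (condExp_mul_of_stronglyMeasurable_left (hq_meas x) hqfiber_int hfiber_int).mono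
            fun _ h _ => h
    _ = ∫ ω in B x, μ[(Y ⁻¹' {x}).indicator f | m] ω ∂μ :=
        setIntegral_congr_ae (hm _ (hB x)) ((hq x).mono fun _ h _ => h)
    _ = ∫ ω in B x, (Y ⁻¹' {x}).indicator f ω ∂μ :=
        setIntegral_condExp hm (hf.indicator (hY x)) (hB x)

end Fiberwise

theorem ite_div_mul_cancel_of_le {a b c : ℝ} (hb : 0 ≤ b) (hba : b ≤ a) :
    (if 0 < a then b / a else c) * a = b := by
  split_ifs with ha
  · exact div_mul_cancel₀ b ha.ne'
  · have ha0 : a = 0 := le_antisymm (not_lt.1 ha) (hb.trans hba)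
    rw [ha0, mul_zero, le_antisymm (hba.trans_eq ha0) hb]

theorem abs_ite_div_le_one {a b c : ℝ} (hb : 0 ≤ b) (hba : b ≤ a) (hc : |c| ≤ 1) :
    |if 0 < a then b / a else c| ≤ 1 := by
  split_ifs with ha
  · rw [abs_of_nonneg (div_nonneg hb ha.le)]
    exact div_le_one_of_le₀ hba ha.le
  · exact hc

section TransitionField

variable {d : ℕ} {X : ℝ → Ω → Fin d}

theorem ind_eq_indicator (X : ℝ → Ω → Fin d) (t : ℝ) (y : Fin d) :
    ind X t y = (X t ⁻¹' {y}).indicator 1 := by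
  funext ω
  by_cases h : X t ω = y <;> simp [ind, h]

theorem ind_mul_ind_eq_indicator (X : ℝ → Ω → Fin d) (s t : ℝ) (x y : Fin d) :
    (fun ω => ind X t y ω * ind X s x ω) = (X s ⁻¹' {x}).indicator (ind X t y) := by
  funext ω
  by_cases h : X s ω = x <;> simp [ind, h]

theorem ind_nonneg (t : ℝ) (y : Fin d) (ω : Ω) : 0 ≤ ind X t y ω := by
  unfold ind; split_ifs <;> norm_num

theorem ind_le_one (t : ℝ) (y : Fin d) (ω : Ω) : ind X t y ω ≤ 1 := by
  unfold ind; split_ifs <;> norm_num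

theorem sum_ind_mul (s : ℝ) (g : Fin d → Ω → ℝ) (ω : Ω) :
    ∑ x, ind X s x ω * g x ω = g (X s ω) ω := by
  rw [Finset.sum_eq_single (X s ω) (fun x _ hx => by simp [ind, Ne.symm hx]) (by simp)]
  simp [ind]

variable {m m0 : MeasurableSpace Ω} {μ : Measure Ω}

theorem integrable_ind [IsFiniteMeasure μ] {t : ℝ} (hXt : Measurable (X t)) (y : Fin d) :
    Integrable (ind X t y) μ := by
  rw [ind_eq_indicator]
  exact (integrable_const 1).indicator (hXt (measurableSet_singleton y))

theorem ae_condExp_ind_mul_ind_mem_Icc [IsFiniteMeasure μ] {s t : ℝ}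
    (hXs : Measurable (X s)) (hXt : Measurable (X t)) (x y : Fin d) :
    ∀ᵐ ω ∂μ, μ[fun ω' => ind X t y ω' * ind X s x ω' | m] ω ∈
      Set.Icc 0 (μ[ind X s x | m] ω) := by
  have hprod_int : Integrable (fun ω => ind X t y ω * ind X s x ω) μ := by
    rw [ind_mul_ind_eq_indicator]
    exact (integrable_ind hXt y).indicator (hXs (measurableSet_singleton x))
  filter_upwards [condExp_nonneg (ae_of_all _ fun ω =>
      mul_nonneg (ind_nonneg t y ω) (ind_nonneg s x ω)),
    condExp_mono hprod_int (integrable_ind hXs x) (ae_of_all _ fun ω =>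
      mul_le_of_le_one_left (ind_nonneg s x ω) (ind_le_one t y ω))] with ω h0 hle
  exact ⟨h0, hle⟩

theorem ctf_mul_condExp_ind_ae_eq [IsFiniteMeasure μ] (ℱ : Filtration ℝ m0) {s t : ℝ}
    (hXs : Measurable (X s)) (hXt : Measurable (X t)) (x y : Fin d) :
    ctf μ ℱ X s t x y * μ[ind X s x | ℱ t]
      =ᵐ[μ] μ[fun ω => ind X t y ω * ind X s x ω | ℱ t] := by
  filter_upwards [ae_condExp_ind_mul_ind_mem_Icc (m := ℱ t) hXs hXt x y] with ω hω
  exact ite_div_mul_cancel_of_le hω.1 hω.2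

theorem ae_abs_ctf_le_one [IsFiniteMeasure μ] (ℱ : Filtration ℝ m0) {s t : ℝ}
    (hXs : Measurable (X s)) (hXt : Measurable (X t)) (x y : Fin d) :
    ∀ᵐ ω ∂μ, |ctf μ ℱ X s t x y ω| ≤ 1 := by
  filter_upwards [ae_condExp_ind_mul_ind_mem_Icc (m := ℱ t) hXs hXt x y] with ω hω
  exact abs_ite_div_le_one hω.1 hω.2 (by split_ifs <;> simp)

theorem measurable_ctf (ℱ : Filtration ℝ m0) (s t : ℝ) (x y : Fin d) :
    Measurable[ℱ t] (ctf μ ℱ X s t x y) :=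
  have hF := (stronglyMeasurable_condExp (m := ℱ t) (μ := μ) (f := ind X s x)).measurable
  .ite (measurableSet_lt measurable_const hF) (stronglyMeasurable_condExp.measurable.div hF)
    measurable_const

theorem integrable_ctf [IsFiniteMeasure μ] (ℱ : Filtration ℝ m0) {s t : ℝ}
    (hXs : Measurable (X s)) (hXt : Measurable (X t)) (x y : Fin d) :
    Integrable (ctf μ ℱ X s t x y) μ :=
  (integrable_const (1 : ℝ)).mono'
    ((measurable_ctf ℱ s t x y).mono (ℱ.le t) le_rfl).aestronglyMeasurable
    (by simpa only [Real.norm_eq_abs] using ae_abs_ctf_le_one ℱ hXs hXt x y)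

end TransitionField

theorem dsmc_transition_field_general
    {m0 : MeasurableSpace Ω} (μ : Measure Ω) [IsProbabilityMeasure μ]
    (ℱ 𝒢 : Filtration ℝ m0) (T : ℝ) (d : ℕ) (X : ℝ → Ω → Fin d)
    (hadp : ∀ t : ℝ, Measurable[𝒢 t] (X t))
    (hX : IsDSMC μ ℱ 𝒢 T X) :
    ∀ s t : ℝ, 0 ≤ s → s ≤ t → t ≤ T → ∀ y : Fin d,
      μ[ind X t y | (ℱ T : MeasurableSpace Ω) ⊔ 𝒢 s]
        =ᵐ[μ] fun ω => ∑ x : Fin d, ind X s x ω * ctf μ ℱ X s t x y ω := by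
  intro s t hs hst htT y
  have hXs : Measurable (X s) := (hadp s).mono (𝒢.le s) le_rfl
  have hXt : Measurable (X t) := (hadp t).mono (𝒢.le t) le_rfl
  have hfield := condExp_sup_comap_ae_eq (ℱ.le t) (fun x => hXs (measurableSet_singleton x))
    (integrable_ind (μ := μ) hXt y) (fun x => (measurable_ctf ℱ s t x y).stronglyMeasurable)
    (fun x => integrable_ctf ℱ hXs hXt x y) fun x => by
      rw [← ind_eq_indicator, ← ind_mul_ind_eq_indicator]
      exact ctf_mul_condExp_ind_ae_eq ℱ hXs hXt x y
  filter_upwards [hX s t hs hst htT y, hfield] with ω hω hfield_ω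
  rw [hω, hfield_ω, sum_ind_mul]

/-- If `X` is an `(𝔽,𝔾)`-DSMC, then its conditional transition field `p` satisfies
`ℙ(X_t = y | ℱ_T ∨ 𝒢_s) = ∑_x 1_{X_s = x} p_{xy}(s,t)` a.s. for all `0 ≤ s ≤ t ≤ T`. -/
theorem dsmc_transition_field
    {m0 : MeasurableSpace Ω} (μ : Measure Ω) [IsProbabilityMeasure μ]
    (ℱ 𝒢 : Filtration ℝ m0) (T : ℝ) (hT : 0 < T) (d : ℕ) (X : ℝ → Ω → Fin d)
    (hadp : ∀ t : ℝ, Measurable[𝒢 t] (X t))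
    (hX : IsDSMC μ ℱ 𝒢 T X) :
    ∀ s t : ℝ, 0 ≤ s → s ≤ t → t ≤ T → ∀ y : Fin d,
      μ[ind X t y | (ℱ T : MeasurableSpace Ω) ⊔ 𝒢 s]
        =ᵐ[μ] fun ω => ∑ x : Fin d, ind X s x ω * ctf μ ℱ X s t x y ω :=
  dsmc_transition_field_general μ ℱ 𝒢 T d X hadp hX
end

section
/- Conversely, suppose X is S-valued 𝔾-adapted càdlàg, and there exists a stochastic-matrix-valued random field P̃(s,t) such that P̃(s,·) is 𝔽-adapted on [s,T] and ℙ(X_t = y | ℱ_T ∨ 𝒢_s) = ∑_{x∈S} 1_{X_s = x} p̃_{xy}(s,t) a.s. for all s ≤ t and y ∈ S. Then X is an (𝔽,𝔾)-DSMC, i.e. ℙ(X_t = y | ℱ_T ∨ 𝒢_s) = ℙ(X_t = y | ℱ_t ∨ σ(X_s)) a.s. -/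
open MeasureTheory ProbabilityTheory

variable {Ω : Type*}

/-! The right-hand side `∑ₓ 1_{X_s = x} p̃ₓᵧ(s,t)` of the transition identity is already measurable
for the smaller σ-algebra `ℱ_t ∨ σ(X_s)`, so by the tower property it is also the conditional
expectation of `1_{X_t = y}` given `ℱ_t ∨ σ(X_s)`. -/

theorem condExp_ae_eq_of_condExp_ae_eq_of_le {m₁ m₂ m₀ : MeasurableSpace Ω} {μ : Measure Ω}
    [IsFiniteMeasure μ] {f g : Ω → ℝ} (hm₁₂ : m₁ ≤ m₂) (hm₂ : m₂ ≤ m₀)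
    (hfg : μ[f | m₂] =ᵐ[μ] g) (hg : StronglyMeasurable[m₁] g) :
    μ[f | m₁] =ᵐ[μ] g :=
  calc μ[f | m₁]
      =ᵐ[μ] μ[μ[f | m₂] | m₁] := (condExp_condExp_of_le hm₁₂ hm₂).symm
    _ =ᵐ[μ] μ[g | m₁] := condExp_congr_ae hfg
    _ = g := condExp_of_stronglyMeasurable (hm₁₂.trans hm₂) hg (integrable_condExp.congr hfg)

theorem measurable_ind_comap {d : ℕ} (X : ℝ → Ω → Fin d) (t : ℝ) (y : Fin d) :
    Measurable[MeasurableSpace.comap (X t) ⊤] (ind X t y) :=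
  (measurable_from_top (f := fun z : Fin d => if z = y then (1 : ℝ) else 0)).comp
    (comap_measurable (X t))

theorem measurable_sum_ind_mul {m : MeasurableSpace Ω} {d : ℕ} (X : ℝ → Ω → Fin d) (s : ℝ)
    (q : Fin d → Ω → ℝ) (hσ : MeasurableSpace.comap (X s) ⊤ ≤ m) (hq : ∀ x, Measurable[m] (q x)) :
    Measurable[m] fun ω => ∑ x : Fin d, ind X s x ω * q x ω :=
  Finset.measurable_sum _ fun x _ => ((measurable_ind_comap X s x).mono hσ le_rfl).mul (hq x)

theorem dsmc_of_transition_field_general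
    {m0 : MeasurableSpace Ω} (μ : Measure Ω) [IsProbabilityMeasure μ]
    (ℱ 𝒢 : Filtration ℝ m0) (T : ℝ) (d : ℕ) (X : ℝ → Ω → Fin d)
    (hadp : ∀ t : ℝ, Measurable[𝒢 t] (X t))
    (p : ℝ → ℝ → Fin d → Fin d → Ω → ℝ)
    -- p̃(s,·) is 𝔽-adapted on [s,T]
    (hmeas : ∀ s t x y, 0 ≤ s → s ≤ t → t ≤ T → Measurable[ℱ t] (p s t x y))
    -- the conditional transition identity
    (hfield : ∀ s t : ℝ, 0 ≤ s → s ≤ t → t ≤ T → ∀ y : Fin d,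
      μ[ind X t y | (ℱ T : MeasurableSpace Ω) ⊔ 𝒢 s]
        =ᵐ[μ] fun ω => ∑ x : Fin d, ind X s x ω * p s t x y ω) :
    IsDSMC μ ℱ 𝒢 T X := by
  intro s t hs hst htT y
  have hfield_st := hfield s t hs hst htT y
  have hσ : MeasurableSpace.comap (X s) ⊤ ≤ 𝒢 s := (hadp s).comap_le
  have hle : (ℱ t : MeasurableSpace Ω) ⊔ MeasurableSpace.comap (X s) ⊤ ≤ ℱ T ⊔ 𝒢 s :=
    sup_le_sup (ℱ.mono htT) hσ
  have hfield_meas :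
      Measurable[(ℱ t : MeasurableSpace Ω) ⊔ MeasurableSpace.comap (X s) ⊤]
        fun ω => ∑ x : Fin d, ind X s x ω * p s t x y ω :=
    measurable_sum_ind_mul X s _ le_sup_right fun x =>
      (hmeas s t x y hs hst htT).mono le_sup_left le_rfl
  exact hfield_st.trans (condExp_ae_eq_of_condExp_ae_eq_of_le hle (sup_le (ℱ.le T) (𝒢.le s))
    hfield_st hfield_meas.stronglyMeasurable).symm

/-- Conversely: if there is a stochastic-matrix-valued random field `p̃(s,t)` with
`p̃(s,t)` `ℱ_t`-measurable for `s ≤ t`, such that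
`ℙ(X_t = y | ℱ_T ∨ 𝒢_s) = ∑_x 1_{X_s = x} p̃_{xy}(s,t)` a.s., then `X` is an
`(𝔽,𝔾)`-DSMC. -/
theorem dsmc_of_transition_field
    {m0 : MeasurableSpace Ω} (μ : Measure Ω) [IsProbabilityMeasure μ]
    (ℱ 𝒢 : Filtration ℝ m0) (T : ℝ) (hT : 0 < T) (d : ℕ) (X : ℝ → Ω → Fin d)
    (hadp : ∀ t : ℝ, Measurable[𝒢 t] (X t))
    (p : ℝ → ℝ → Fin d → Fin d → Ω → ℝ)
    -- p̃(s,t) is a stochastic matrix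
    (hpos : ∀ s t x y, 0 ≤ s → s ≤ t → t ≤ T → ∀ ω, 0 ≤ p s t x y ω)
    (hrow : ∀ s t x, 0 ≤ s → s ≤ t → t ≤ T → ∀ ω, ∑ y : Fin d, p s t x y ω = 1)
    -- p̃(s,·) is 𝔽-adapted on [s,T]
    (hmeas : ∀ s t x y, 0 ≤ s → s ≤ t → t ≤ T → Measurable[ℱ t] (p s t x y))
    -- the conditional transition identity
    (hfield : ∀ s t : ℝ, 0 ≤ s → s ≤ t → t ≤ T → ∀ y : Fin d,
      μ[ind X t y | (ℱ T : MeasurableSpace Ω) ⊔ 𝒢 s]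
        =ᵐ[μ] fun ω => ∑ x : Fin d, ind X s x ω * p s t x y ω) :
    IsDSMC μ ℱ 𝒢 T X :=
  dsmc_of_transition_field_general μ ℱ 𝒢 T d X hadp p hmeas hfield
end

section
/- Assume 𝔽 is ℙ-immersed in 𝔽 ∨ 𝔾. If X is an (𝔽,𝔾)-doubly stochastic Markov chain, then X is an (𝔽,𝔾)-conditional Markov chain: for all x_1,…,x_k ∈ S and 0 ≤ t ≤ t_1 ≤ … ≤ t_k ≤ T, ℙ(X_{t_1}=x_1,…,X_{t_k}=x_k | ℱ_t ∨ 𝒢_t) = ℙ(X_{t_1}=x_1,…,X_{t_k}=x_k | ℱ_t ∨ σ(X_t)). -/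
open MeasureTheory ProbabilityTheory

variable {Ω : Type*}

/-!
Induct on the number of factors, peeling off the earliest time `t₁ ≥ s`. Given `ℱ_T ∨ 𝒢_{t₁}`,
the remaining product has conditional expectation `G(X_{t₁})` with `G` an `ℱ_T`-measurable family,
and on `{X_{t₁} = x₁}` this is the `ℱ_T`-measurable `G(x₁)`; pulling it out of the conditional
expectation given `ℱ_T ∨ 𝒢_s` and applying the DSMC property to `1_{X_{t₁} = x₁}` shows that
`ℙ(X_{t₁} = x₁, …, X_{t_k} = x_k | ℱ_T ∨ 𝒢_s)` depends on `𝒢_s` only through `X_s`.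

Taking `s = t`, this conditional probability is `F(X_t)` for a bounded `ℱ_T`-measurable family
`F`. Conditioning further on `ℱ_t ∨ 𝒢_t` or on the smaller `ℱ_t ∨ σ(X_t)` gives, by immersion,
`∑ₓ 1_{X_t = x} E[F x | ℱ_t]` in both cases.
-/

open Filter Finset

section Factorization

variable {S : Type*} [mS : MeasurableSpace S] {m : MeasurableSpace Ω} {Y : Ω → S}

-- Doob–Dynkin: `m ⊔ σ(Y)` is the pullback of `m ⊗ 𝒮` along `ω ↦ (ω, Y ω)`.
theorem Measurable.exists_eq_eval_of_sup_comap {E : Type*} [MeasurableSpace E]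
    [StandardBorelSpace E] [Nonempty E] {f : Ω → E}
    (hf : Measurable[m ⊔ MeasurableSpace.comap Y mS] f) :
    ∃ F : S → Ω → E, (∀ x, Measurable[m] (F x)) ∧ ∀ ω, f ω = F (Y ω) ω := by
  rw [← MeasurableSpace.comap_id (m := m), ← MeasurableSpace.comap_prodMk] at hf
  obtain ⟨h, hh, rfl⟩ := hf.exists_eq_measurable_comp
  exact ⟨fun x ω => h (ω, x), fun x => hh.comp (@measurable_prodMk_right _ _ m _ x),
    fun ω => rfl⟩

theorem MeasureTheory.AEStronglyMeasurable.exists_ae_eq_eval_of_sup_comap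
    {m0 : MeasurableSpace Ω} {μ : Measure Ω} {f : Ω → ℝ}
    (hf : AEStronglyMeasurable[m ⊔ MeasurableSpace.comap Y mS] f μ) :
    ∃ F : S → Ω → ℝ, (∀ x, Measurable[m] (F x)) ∧ f =ᵐ[μ] fun ω => F (Y ω) ω := by
  obtain ⟨F, hF, hmk⟩ := hf.stronglyMeasurable_mk.measurable.exists_eq_eval_of_sup_comap
  exact ⟨F, hF, hf.ae_eq_mk.trans (Eventually.of_forall hmk)⟩

theorem MeasureTheory.AEStronglyMeasurable.exists_bdd_ae_eq_eval_of_sup_comap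
    {m0 : MeasurableSpace Ω} {μ : Measure Ω} {f : Ω → ℝ}
    (hf : AEStronglyMeasurable[m ⊔ MeasurableSpace.comap Y mS] f μ)
    {C : ℝ} (hC : 0 ≤ C) (hbdd : ∀ᵐ ω ∂μ, |f ω| ≤ C) :
    ∃ F : S → Ω → ℝ, (∀ x, Measurable[m] (F x)) ∧ (∀ x ω, |F x ω| ≤ C) ∧
      f =ᵐ[μ] fun ω => F (Y ω) ω := by
  obtain ⟨F, hF, hfF⟩ := hf.exists_ae_eq_eval_of_sup_comap (m := m)
  refine ⟨fun x ω => max (-C) (min C (F x ω)),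
    fun x => measurable_const.max (measurable_const.min (hF x)),
    fun x ω => abs_le.2 ⟨le_max_left _ _, max_le (by linarith) (min_le_left _ _)⟩, ?_⟩
  filter_upwards [hfF, hbdd] with ω hω hbω
  rw [← hω, min_eq_right (abs_le.1 hbω).2, max_eq_right (abs_le.1 hbω).1]

end Factorization

theorem eval_eq_sum_indicator {S M : Type*} [Fintype S] [AddCommMonoid M] (Y : Ω → S)
    (G : S → Ω → M) :
    (fun ω => G (Y ω) ω) = ∑ x, (Y ⁻¹' {x}).indicator (G x) := by
  classical
  ext ω
  simp [Finset.sum_apply, Set.indicator_apply]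

section CondExp

variable {m0 : MeasurableSpace Ω} {μ : Measure Ω}
  {E : Type*} [NormedAddCommGroup E] [NormedSpace ℝ E] [CompleteSpace E]

theorem condExp_eval_ae_eq {S : Type*} [Fintype S] [MeasurableSpace S]
    [MeasurableSingletonClass S] {m : MeasurableSpace Ω} (hm : m ≤ m0) {Y : Ω → S}
    (hY : Measurable[m] Y) {F : S → Ω → E} (hF : ∀ x, Integrable (F x) μ) :
    μ[fun ω => F (Y ω) ω | m] =ᵐ[μ] fun ω => μ[F (Y ω) | m] ω := by
  have hYx : ∀ x, MeasurableSet[m] (Y ⁻¹' {x}) := fun x => hY (measurableSet_singleton x)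
  have hind := ae_all_iff.2 fun x => condExp_indicator (hF x) (hYx x)
  rw [eval_eq_sum_indicator Y F, eval_eq_sum_indicator Y fun x => μ[F x | m]]
  refine (condExp_finsetSum (fun x _ => (hF x).indicator (hm _ (hYx x))) _).trans ?_
  filter_upwards [hind] with ω hω
  simp only [Finset.sum_apply, hω]

theorem condExp_ae_eq_of_le_of_ae_eq [IsFiniteMeasure μ] {n m' m : MeasurableSpace Ω}
    (hnm' : n ≤ m') (hm'm : m' ≤ m) (hm : m ≤ m0) {ψ : Ω → E}
    (h : μ[ψ | m] =ᵐ[μ] μ[ψ | n]) : μ[ψ | m'] =ᵐ[μ] μ[ψ | n] :=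
  calc μ[ψ | m'] =ᵐ[μ] μ[μ[ψ | m] | m'] := (condExp_condExp_of_le hm'm hm).symm
    _ =ᵐ[μ] μ[μ[ψ | n] | m'] := condExp_congr_ae h
    _ = μ[ψ | n] := condExp_of_stronglyMeasurable (hm'm.trans hm)
      (stronglyMeasurable_condExp.mono hnm') integrable_condExp

theorem condExp_ae_eq_condExp_eval_of_immersion [IsFiniteMeasure μ] {S : Type*} [Fintype S]
    [MeasurableSpace S] [MeasurableSingletonClass S] {n m M : MeasurableSpace Ω}
    (hmM : m ≤ M) (hM : M ≤ m0) {Y : Ω → S} (hY : Measurable[m] Y) {Z : Ω → E}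
    {F : S → Ω → E} (hF : ∀ x, Integrable (F x) μ) (hZF : μ[Z | M] =ᵐ[μ] fun ω => F (Y ω) ω)
    (himm : ∀ x, μ[F x | m] =ᵐ[μ] μ[F x | n]) :
    μ[Z | m] =ᵐ[μ] fun ω => μ[F (Y ω) | n] ω := by
  have himm_all := ae_all_iff.2 himm
  calc μ[Z | m] =ᵐ[μ] μ[μ[Z | M] | m] := (condExp_condExp_of_le hmM hM).symm
    _ =ᵐ[μ] μ[fun ω => F (Y ω) ω | m] := condExp_congr_ae hZF
    _ =ᵐ[μ] fun ω => μ[F (Y ω) | m] ω := condExp_eval_ae_eq (hmM.trans hM) hY hF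
    _ =ᵐ[μ] fun ω => μ[F (Y ω) | n] ω := by
      filter_upwards [himm_all] with ω hω
      exact hω (Y ω)

end CondExp

section Indicator

variable {d : ℕ} {X : ℝ → Ω → Fin d}

theorem measurable_ind {m : MeasurableSpace Ω} {t : ℝ} (hX : Measurable[m] (X t)) (y : Fin d) :
    Measurable[m] (ind X t y) :=
  Measurable.ite (hX (measurableSet_singleton y)) measurable_const measurable_const

theorem abs_prod_ind_le_one {ι : Type*} (s : Finset ι) (ts : ι → ℝ) (xs : ι → Fin d) (ω : Ω) :
    |∏ i ∈ s, ind X (ts i) (xs i) ω| ≤ 1 := by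
  rw [abs_prod]
  refine prod_le_one (fun _ _ => abs_nonneg _) fun i _ => ?_
  unfold ind
  split_ifs <;> simp

theorem integrable_prod_ind {m0 : MeasurableSpace Ω} {μ : Measure Ω} [IsFiniteMeasure μ]
    (hX : ∀ t, Measurable (X t)) {ι : Type*} (s : Finset ι) (ts : ι → ℝ) (xs : ι → Fin d) :
    Integrable (fun ω => ∏ i ∈ s, ind X (ts i) (xs i) ω) μ :=
  Integrable.of_bound
    (measurable_prod s fun i _ => measurable_ind (hX (ts i)) (xs i)).aestronglyMeasurable 1
    (Eventually.of_forall fun ω => abs_prod_ind_le_one s ts xs ω)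

theorem ind_mul_eval (G : Fin d → Ω → ℝ) (t : ℝ) (x : Fin d) (ω : Ω) :
    ind X t x ω * G (X t ω) ω = ind X t x ω * G x ω := by
  unfold ind
  split_ifs with h <;> simp [h]

end Indicator

theorem monotoneOn_Icc_one_of_le_add_one {ts : ℕ → ℝ} {k : ℕ}
    (h : ∀ i, 1 ≤ i → i < k → ts i ≤ ts (i + 1)) : MonotoneOn ts (Set.Icc 1 k) :=
  monotoneOn_of_le_add_one Set.ordConnected_Icc fun i _ hi hi' =>
    h i hi.1 (by simp only [Set.mem_Icc] at hi'; omega)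

theorem IsDSMC.aestronglyMeasurable_condExp_prod_ind {m0 : MeasurableSpace Ω} {μ : Measure Ω}
    [IsFiniteMeasure μ] {ℱ 𝒢 : Filtration ℝ m0} {T : ℝ} {d : ℕ} {X : ℝ → Ω → Fin d}
    (hX : IsDSMC μ ℱ 𝒢 T X) (hadp : ∀ t, Measurable[𝒢 t] (X t)) (k : ℕ) :
    ∀ (s : ℝ) (ts : ℕ → ℝ) (xs : ℕ → Fin d), 0 ≤ s → (∀ i < k, s ≤ ts i) →
      MonotoneOn ts (Set.Iio k) → (∀ i < k, ts i ≤ T) →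
      AEStronglyMeasurable[(ℱ T : MeasurableSpace Ω) ⊔ MeasurableSpace.comap (X s) ⊤]
        (μ[fun ω => ∏ i ∈ range k, ind X (ts i) (xs i) ω |
          (ℱ T : MeasurableSpace Ω) ⊔ 𝒢 s]) μ := by
  have hXm : ∀ t, Measurable (X t) := fun t => (hadp t).mono (𝒢.le t) le_rfl
  induction k with
  | zero =>
    intro s ts xs _ _ _ _
    simp only [range_zero, prod_empty]
    rw [condExp_const (sup_le (ℱ.le T) (𝒢.le s))]
    exact aestronglyMeasurable_const
  | succ k ih =>
    intro s ts xs hs0 hs hmono hT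
    set t₁ := ts 0
    set I := ind X t₁ (xs 0)
    set W := fun ω => ∏ i ∈ range k, ind X (ts (i + 1)) (xs (i + 1)) ω
    have hsplit : (fun ω => ∏ i ∈ range (k + 1), ind X (ts i) (xs i) ω) = I * W := by
      ext ω
      simp [I, W, t₁, prod_range_succ', mul_comm]
    have hst₁ : s ≤ t₁ := hs 0 k.succ_pos
    have ht₁T : t₁ ≤ T := hT 0 k.succ_pos
    have hW : AEStronglyMeasurable[(ℱ T : MeasurableSpace Ω) ⊔ MeasurableSpace.comap (X t₁) ⊤]
        (μ[W | (ℱ T : MeasurableSpace Ω) ⊔ 𝒢 t₁]) μ :=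
      ih t₁ (fun i => ts (i + 1)) (fun i => xs (i + 1)) (hs0.trans hst₁)
        (fun i hi => hmono (by simp) (by simp; omega) (by omega))
        (fun i hi j hj hij => hmono (by simp at hi ⊢; omega) (by simp at hj ⊢; omega) (by omega))
        (fun i hi => hT (i + 1) (by omega))
    obtain ⟨G, hG, hWG⟩ := hW.exists_ae_eq_eval_of_sup_comap (m := ℱ T)
    have hIW_int : Integrable (I * W) μ := hsplit ▸ integrable_prod_ind hXm _ _ _
    have hI_int : Integrable I μ := by
      simpa using integrable_prod_ind (μ := μ) hXm {0} ts xs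
    have hG₀ : StronglyMeasurable[(ℱ T : MeasurableSpace Ω) ⊔ 𝒢 s] (G (xs 0)) :=
      ((hG (xs 0)).mono (le_sup_left (b := (𝒢 s : MeasurableSpace Ω))) le_rfl
        ).stronglyMeasurable
    have hstep₁ : μ[I * W | (ℱ T : MeasurableSpace Ω) ⊔ 𝒢 t₁] =ᵐ[μ] G (xs 0) * I := by
      have hI : StronglyMeasurable[(ℱ T : MeasurableSpace Ω) ⊔ 𝒢 t₁] I :=
        ((measurable_ind (hadp t₁) (xs 0)).mono (le_sup_right (a := (ℱ T : MeasurableSpace Ω)))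
          le_rfl).stronglyMeasurable
      filter_upwards [condExp_mul_of_stronglyMeasurable_left hI hIW_int
        (integrable_prod_ind hXm _ _ _), hWG] with ω hmul hω
      rw [hmul, Pi.mul_apply, hω, ind_mul_eval, Pi.mul_apply, mul_comm]
    have hstep₀ : μ[I * W | (ℱ T : MeasurableSpace Ω) ⊔ 𝒢 s]
        =ᵐ[μ] G (xs 0) * μ[I | (ℱ t₁ : MeasurableSpace Ω) ⊔ MeasurableSpace.comap (X s) ⊤] :=
      calc μ[I * W | (ℱ T : MeasurableSpace Ω) ⊔ 𝒢 s]
          =ᵐ[μ] μ[μ[I * W | (ℱ T : MeasurableSpace Ω) ⊔ 𝒢 t₁] |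
            (ℱ T : MeasurableSpace Ω) ⊔ 𝒢 s] :=
            (condExp_condExp_of_le (sup_le_sup_left (𝒢.mono hst₁) _)
              (sup_le (ℱ.le T) (𝒢.le t₁))).symm
        _ =ᵐ[μ] μ[G (xs 0) * I | (ℱ T : MeasurableSpace Ω) ⊔ 𝒢 s] := condExp_congr_ae hstep₁
        _ =ᵐ[μ] G (xs 0) * μ[I | (ℱ T : MeasurableSpace Ω) ⊔ 𝒢 s] :=
            condExp_mul_of_stronglyMeasurable_left hG₀ (integrable_condExp.congr hstep₁) hI_int
        _ =ᵐ[μ] G (xs 0) * μ[I | (ℱ t₁ : MeasurableSpace Ω) ⊔ MeasurableSpace.comap (X s) ⊤] :=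
            EventuallyEq.rfl.mul (hX s t₁ hs0 hst₁ ht₁T (xs 0))
    rw [hsplit]
    refine (StronglyMeasurable.aestronglyMeasurable ?_).congr hstep₀.symm
    exact ((hG (xs 0)).mono le_sup_left le_rfl).stronglyMeasurable.mul
      (stronglyMeasurable_condExp.mono
        (sup_le_sup_right (ℱ.mono ht₁T) (MeasurableSpace.comap (X s) ⊤)))

theorem IsDSMC.aestronglyMeasurable_condExp_prod_Icc {m0 : MeasurableSpace Ω} {μ : Measure Ω}
    [IsFiniteMeasure μ] {ℱ 𝒢 : Filtration ℝ m0} {T : ℝ} {d : ℕ} {X : ℝ → Ω → Fin d}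
    (hX : IsDSMC μ ℱ 𝒢 T X) (hadp : ∀ t, Measurable[𝒢 t] (X t)) {k : ℕ} {t : ℝ}
    {ts : ℕ → ℝ} (xs : ℕ → Fin d) (ht0 : 0 ≤ t) (hts : ∀ i, 1 ≤ i → i ≤ k → t ≤ ts i)
    (hmono : MonotoneOn ts (Set.Icc 1 k)) (htsk : ts k ≤ T) :
    AEStronglyMeasurable[(ℱ T : MeasurableSpace Ω) ⊔ MeasurableSpace.comap (X t) ⊤]
      (μ[fun ω => ∏ i ∈ Finset.Icc 1 k, ind X (ts i) (xs i) ω |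
        (ℱ T : MeasurableSpace Ω) ⊔ 𝒢 t]) μ := by
  have hIcc_range : (fun ω => ∏ i ∈ Finset.Icc 1 k, ind X (ts i) (xs i) ω)
      = fun ω => ∏ i ∈ range k, ind X (ts (i + 1)) (xs (i + 1)) ω := by
    ext ω
    rw [← Ico_add_one_right_eq_Icc, prod_Ico_eq_prod_range]
    simp [add_comm]
  rw [hIcc_range]
  exact hX.aestronglyMeasurable_condExp_prod_ind hadp k t _ _ ht0
    (fun i hi => hts (i + 1) (by omega) (by omega))
    (fun i hi j hj hij => hmono ⟨by omega, hi⟩ ⟨by omega, hj⟩ (by omega))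
    (fun i hi => (hmono ⟨by omega, hi⟩ ⟨by omega, le_rfl⟩ (by omega)).trans htsk)

theorem dsmc_is_cmc_under_immersion_general
    {m0 : MeasurableSpace Ω} (μ : Measure Ω) [IsProbabilityMeasure μ]
    (ℱ 𝒢 : Filtration ℝ m0) (T : ℝ) (d : ℕ) (X : ℝ → Ω → Fin d)
    (hadp : ∀ t : ℝ, Measurable[𝒢 t] (X t))
    -- immersion of 𝔽 in 𝔽 ∨ 𝔾
    (himm : ∀ ψ : Ω → ℝ, Measurable[ℱ T] ψ → (∃ C, ∀ ω, |ψ ω| ≤ C) →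
      ∀ t ∈ Set.Icc (0:ℝ) T,
        μ[ψ | (ℱ t : MeasurableSpace Ω) ⊔ 𝒢 t] =ᵐ[μ] μ[ψ | ℱ t])
    (hX : IsDSMC μ ℱ 𝒢 T X) :
    ∀ (k : ℕ) (t : ℝ) (ts : ℕ → ℝ) (xs : ℕ → Fin d),
      0 ≤ t → (∀ i, 1 ≤ i → i ≤ k → t ≤ ts i) →
      (∀ i, 1 ≤ i → i < k → ts i ≤ ts (i + 1)) → ts k ≤ T →
      μ[(fun ω => ∏ i ∈ Finset.Icc 1 k, ind X (ts i) (xs i) ω) |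
          (ℱ t : MeasurableSpace Ω) ⊔ 𝒢 t]
        =ᵐ[μ] μ[(fun ω => ∏ i ∈ Finset.Icc 1 k, ind X (ts i) (xs i) ω) |
          (ℱ t : MeasurableSpace Ω) ⊔ MeasurableSpace.comap (X t) ⊤] := by
  intro k t ts xs ht0 hts hmono htsk
  have hσ : MeasurableSpace.comap (X t) ⊤ ≤ 𝒢 t := (hadp t).comap_le
  rcases Nat.eq_zero_or_pos k with rfl | hk
  · simp only [Icc_eq_empty_of_lt zero_lt_one, prod_empty]
    rw [condExp_const (sup_le (ℱ.le t) (𝒢.le t)),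
      condExp_const (sup_le (ℱ.le t) (hσ.trans (𝒢.le t)))]
  have hmono' := monotoneOn_Icc_one_of_le_add_one hmono
  have htT : t ≤ T :=
    (hts 1 le_rfl hk).trans ((hmono' ⟨le_rfl, hk⟩ ⟨hk, le_rfl⟩ hk).trans htsk)
  have hle_FT : (ℱ t : MeasurableSpace Ω) ⊔ 𝒢 t ≤ ℱ T ⊔ 𝒢 t := sup_le_sup_right (ℱ.mono htT) _
  have hle_G : (ℱ t : MeasurableSpace Ω) ⊔ MeasurableSpace.comap (X t) ⊤ ≤ ℱ t ⊔ 𝒢 t :=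
    sup_le_sup_left hσ _
  have hle_m0 : (ℱ T : MeasurableSpace Ω) ⊔ 𝒢 t ≤ m0 := sup_le (ℱ.le T) (𝒢.le t)
  obtain ⟨F, hFm, hFb, hZF⟩ :=
    (hX.aestronglyMeasurable_condExp_prod_Icc hadp xs ht0 hts hmono' htsk
      ).exists_bdd_ae_eq_eval_of_sup_comap (m := ℱ T) zero_le_one
      (ae_bdd_abs_condExp_of_ae_bdd_abs (Eventually.of_forall (abs_prod_ind_le_one _ _ _)))
  have hF : ∀ x, Integrable (F x) μ := fun x =>
    Integrable.of_bound ((hFm x).mono (ℱ.le T) le_rfl).aestronglyMeasurable 1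
      (Eventually.of_forall (hFb x))
  have himmF : ∀ x, μ[F x | (ℱ t : MeasurableSpace Ω) ⊔ 𝒢 t] =ᵐ[μ] μ[F x | ℱ t] := fun x =>
    himm (F x) (hFm x) ⟨1, hFb x⟩ t ⟨ht0, htT⟩
  exact (condExp_ae_eq_condExp_eval_of_immersion hle_FT hle_m0
    ((hadp t).mono le_sup_right le_rfl) hF hZF himmF).trans
    (condExp_ae_eq_condExp_eval_of_immersion (hle_G.trans hle_FT) hle_m0
      (measurable_iff_comap_le.2 le_sup_right) hF hZF fun x =>
        condExp_ae_eq_of_le_of_ae_eq le_sup_left hle_G (hle_FT.trans hle_m0) (himmF x)).symm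

/-- If `𝔽` is `ℙ`-immersed in `𝔽 ∨ 𝔾` (expressed by the standard characterization via
conditional expectations of bounded `ℱ_T`-measurable random variables) and `X` is an
`(𝔽,𝔾)`-DSMC, then `X` is an `(𝔽,𝔾)`-conditional Markov chain: for all states
`x_1, …, x_k` and times `0 ≤ t ≤ t_1 ≤ … ≤ t_k ≤ T`,
`ℙ(X_{t_1} = x_1, …, X_{t_k} = x_k | ℱ_t ∨ 𝒢_t)
  = ℙ(X_{t_1} = x_1, …, X_{t_k} = x_k | ℱ_t ∨ σ(X_t))` a.s. -/
theorem dsmc_is_cmc_under_immersion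
    {m0 : MeasurableSpace Ω} (μ : Measure Ω) [IsProbabilityMeasure μ]
    (ℱ 𝒢 : Filtration ℝ m0) (T : ℝ) (hT : 0 < T) (d : ℕ) (X : ℝ → Ω → Fin d)
    (hadp : ∀ t : ℝ, Measurable[𝒢 t] (X t))
    -- immersion of 𝔽 in 𝔽 ∨ 𝔾
    (himm : ∀ ψ : Ω → ℝ, Measurable[ℱ T] ψ → (∃ C, ∀ ω, |ψ ω| ≤ C) →
      ∀ t ∈ Set.Icc (0:ℝ) T,
        μ[ψ | (ℱ t : MeasurableSpace Ω) ⊔ 𝒢 t] =ᵐ[μ] μ[ψ | ℱ t])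
    (hX : IsDSMC μ ℱ 𝒢 T X) :
    ∀ (k : ℕ) (t : ℝ) (ts : ℕ → ℝ) (xs : ℕ → Fin d),
      0 ≤ t → (∀ i, 1 ≤ i → i ≤ k → t ≤ ts i) →
      (∀ i, 1 ≤ i → i < k → ts i ≤ ts (i + 1)) → ts k ≤ T →
      μ[(fun ω => ∏ i ∈ Finset.Icc 1 k, ind X (ts i) (xs i) ω) |
          (ℱ t : MeasurableSpace Ω) ⊔ 𝒢 t]
        =ᵐ[μ] μ[(fun ω => ∏ i ∈ Finset.Icc 1 k, ind X (ts i) (xs i) ω) |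
          (ℱ t : MeasurableSpace Ω) ⊔ MeasurableSpace.comap (X t) ⊤] :=
  dsmc_is_cmc_under_immersion_general μ ℱ 𝒢 T d X hadp himm hX
end

section
/- Under the setup of the change-of-measure construction, suppose η is a strictly positive 𝔾̂-martingale (𝒢̂_t = ℱ_T ∨ 𝒢_t) with η_0 = 1 such that η_t is ℱ_t ∨ 𝒢_t-measurable for each t, and that 𝔽 is ℚ-immersed in 𝔽∨𝔾. Define dℙ/dℚ = η_T on 𝒢̂_T. Then for every bounded ℱ_T-measurable ψ and t ∈ [0,T]: E_ℙ[ψ | ℱ_t ∨ 𝒢_t] = E_ℚ[ψ | ℱ_t] = E_ℙ[ψ | ℱ_t] ℙ-a.s.; in particular 𝔽 is ℙ-immersed in 𝔽∨𝔾. -/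
/-!
For `s ∈ ℱ_t ∨ 𝒢_t`, both `ψ` and `g = E_ℚ[ψ | ℱ_t ∨ 𝒢_t]` are `𝒢̂_t`-measurable, so replacing
the density `η_T` by `E_ℚ[η_T | 𝒢̂_t] = η_t` gives `∫_s ψ dℙ = ∫_s ψ η_t dℚ` and
`∫_s g dℙ = ∫_s g η_t dℚ`; since `η_t` is `ℱ_t ∨ 𝒢_t`-measurable, the two right-hand sides
agree. Hence `g` is also the `ℙ`-conditional expectation of `ψ` given `ℱ_t ∨ 𝒢_t`. By
`ℚ`-immersion `g = E_ℚ[ψ | ℱ_t]`, which is `ℱ_t`-measurable and therefore equals `E_ℙ[ψ | ℱ_t]`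
as well.
-/

open MeasureTheory ProbabilityTheory

section

variable {Ω : Type*} {m m0 : MeasurableSpace Ω} {μ : Measure Ω}

theorem setIntegral_mul_eq_of_condExp_ae_eq (hm : m ≤ m0) [SigmaFinite (μ.trim hm)]
    {X Y Z : Ω → ℝ} (hX : StronglyMeasurable[m] X) (hXY : Integrable (X * Y) μ)
    (hY : Integrable Y μ) (hYZ : μ[Y | m] =ᵐ[μ] Z) {s : Set Ω} (hs : MeasurableSet[m] s) :
    ∫ ω in s, X ω * Y ω ∂μ = ∫ ω in s, X ω * Z ω ∂μ := by
  refine (setIntegral_condExp hm hXY hs).symm.trans (setIntegral_congr_ae (hm s hs) ?_)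
  filter_upwards [condExp_mul_of_stronglyMeasurable_left hX hXY hY, hYZ] with ω hω₁ hω₂ _
  rw [hω₁, Pi.mul_apply, hω₂]

theorem setIntegral_withDensity_ofReal {D : Ω → ℝ} (hD : AEMeasurable D μ)
    (hD_nonneg : 0 ≤ᵐ[μ] D) (f : Ω → ℝ) {s : Set Ω} (hs : MeasurableSet s) :
    ∫ ω in s, f ω ∂μ.withDensity (fun ω => ENNReal.ofReal (D ω)) = ∫ ω in s, D ω * f ω ∂μ := by
  refine (setIntegral_withDensity_eq_setIntegral_smul₀ hD.real_toNNReal.restrict f hs).trans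
    (setIntegral_congr_ae hs ?_)
  filter_upwards [hD_nonneg] with ω hω _
  rw [NNReal.smul_def, smul_eq_mul, Real.coe_toNNReal _ hω]

theorem condExp_ae_eq_of_le_of_condExp_ae_eq {m' : MeasurableSpace Ω} (hm' : m' ≤ m)
    (hm : m ≤ m0) [SigmaFinite (μ.trim hm)] [SigmaFinite (μ.trim (hm'.trans hm))] {f g : Ω → ℝ}
    (hg : StronglyMeasurable[m'] g) (hfg : μ[f | m] =ᵐ[μ] g) : μ[f | m'] =ᵐ[μ] g :=
  calc μ[f | m'] =ᵐ[μ] μ[μ[f | m] | m'] := (condExp_condExp_of_le hm' hm).symm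
    _ =ᵐ[μ] μ[g | m'] := condExp_congr_ae hfg
    _ = g := condExp_of_stronglyMeasurable _ hg (integrable_condExp.congr hfg)

theorem condExp_withDensity_ae_eq_condExp [IsFiniteMeasure μ] {n : MeasurableSpace Ω}
    (hmn : m ≤ n) (hn : n ≤ m0) {D ζ ψ : Ω → ℝ} (hD : Integrable D μ) (hD_nonneg : 0 ≤ᵐ[μ] D)
    (hDζ : μ[D | n] =ᵐ[μ] ζ) (hζ : StronglyMeasurable[m] ζ) (hψ : StronglyMeasurable[n] ψ)
    {C : ℝ} (hψC : ∀ᵐ ω ∂μ, |ψ ω| ≤ C) :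
    (μ.withDensity fun ω => ENNReal.ofReal (D ω))[ψ | m]
      =ᵐ[μ.withDensity fun ω => ENNReal.ofReal (D ω)] μ[ψ | m] := by
  set ρ := μ.withDensity fun ω => ENNReal.ofReal (D ω)
  set g := μ[ψ | m]
  have hm : m ≤ m0 := hmn.trans hn
  have : IsFiniteMeasure ρ := isFiniteMeasure_withDensity_ofReal hD.2
  have hρμ : ρ ≪ μ := withDensity_absolutelyContinuous _ _
  have hψ₀ : AEStronglyMeasurable[m0] ψ μ := (hψ.mono hn).aestronglyMeasurable
  have hg₀ : AEStronglyMeasurable[m0] g μ :=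
    (stronglyMeasurable_condExp.mono hm).aestronglyMeasurable
  have hgC : ∀ᵐ ω ∂μ, |g ω| ≤ C := ae_bdd_abs_condExp_of_ae_bdd_abs hψC
  have hζD : Integrable ζ μ := integrable_condExp.congr hDζ
  have hρ (f : Ω → ℝ) {s : Set Ω} (hs : MeasurableSet[m] s) :
      ∫ ω in s, f ω ∂ρ = ∫ ω in s, f ω * D ω ∂μ := by
    rw [setIntegral_withDensity_ofReal hD.aemeasurable hD_nonneg f (hm s hs)]
    simp only [mul_comm (D _)]
  have key (s : Set Ω) (hs : MeasurableSet[m] s) : ∫ ω in s, g ω ∂ρ = ∫ ω in s, ψ ω ∂ρ :=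
    calc ∫ ω in s, g ω ∂ρ = ∫ ω in s, g ω * ζ ω ∂μ := by
          rw [hρ g hs, setIntegral_mul_eq_of_condExp_ae_eq hn (stronglyMeasurable_condExp.mono hmn)
            (hD.bdd_mul hg₀ hgC) hD hDζ (hmn s hs)]
      _ = ∫ ω in s, ψ ω * ζ ω ∂μ := by
          simp only [mul_comm _ (ζ _)]
          exact (setIntegral_mul_eq_of_condExp_ae_eq hm hζ (hζD.mul_bdd hψ₀ hψC)
            (.of_bound hψ₀ C hψC) (ae_eq_refl g) hs).symm
      _ = ∫ ω in s, ψ ω ∂ρ := by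
          rw [hρ ψ hs, setIntegral_mul_eq_of_condExp_ae_eq hn hψ (hD.bdd_mul hψ₀ hψC) hD hDζ
            (hmn s hs)]
  refine (ae_eq_condExp_of_forall_setIntegral_eq hm ?_ ?_ (fun s hs _ => key s hs)
    stronglyMeasurable_condExp.aestronglyMeasurable).symm
  · exact .of_bound (hψ₀.mono_ac hρμ) C (hρμ.ae_le hψC)
  · exact fun s _ _ => (Integrable.of_bound (hg₀.mono_ac hρμ) C (hρμ.ae_le hgC)).integrableOn

end

theorem immersion_preserved_under_change_of_measure_general
    {Ω : Type*} {m0 : MeasurableSpace Ω} (μ : Measure Ω) [IsProbabilityMeasure μ]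
    (ℱ 𝒢 𝔾h : Filtration ℝ m0) (T : ℝ)
    (hGh : ∀ t : ℝ, (𝔾h t : MeasurableSpace Ω) = (ℱ T : MeasurableSpace Ω) ⊔ 𝒢 t)
    (η : ℝ → Ω → ℝ)
    (hηpos : ∀ t ω, 0 < η t ω)
    (hηmart : Martingale η 𝔾h μ)
    (hηmeas : ∀ t : ℝ, Measurable[(ℱ t : MeasurableSpace Ω) ⊔ 𝒢 t] (η t))
    -- 𝔽 is ℚ-immersed in 𝔽 ∨ 𝔾
    (himm : ∀ ψ : Ω → ℝ, Measurable[ℱ T] ψ → (∃ C, ∀ ω, |ψ ω| ≤ C) →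
      ∀ t ∈ Set.Icc (0:ℝ) T,
        μ[ψ | (ℱ t : MeasurableSpace Ω) ⊔ 𝒢 t] =ᵐ[μ] μ[ψ | ℱ t]) :
    ∀ ψ : Ω → ℝ, Measurable[ℱ T] ψ → (∃ C, ∀ ω, |ψ ω| ≤ C) →
      ∀ t ∈ Set.Icc (0:ℝ) T,
      (condExp ((ℱ t : MeasurableSpace Ω) ⊔ 𝒢 t)
          (μ.withDensity fun ω => ENNReal.ofReal (η T ω)) ψ
        =ᵐ[μ.withDensity fun ω => ENNReal.ofReal (η T ω)] condExp (ℱ t) μ ψ) ∧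
      (condExp ((ℱ t : MeasurableSpace Ω) ⊔ 𝒢 t)
          (μ.withDensity fun ω => ENNReal.ofReal (η T ω)) ψ
        =ᵐ[μ.withDensity fun ω => ENNReal.ofReal (η T ω)]
          condExp (ℱ t) (μ.withDensity fun ω => ENNReal.ofReal (η T ω)) ψ) := by
  intro ψ hψ hψC t ht
  obtain ⟨C, hC⟩ := hψC
  set ρ := μ.withDensity fun ω => ENNReal.ofReal (η T ω)
  have : IsFiniteMeasure ρ := isFiniteMeasure_withDensity_ofReal (hηmart.integrable T).2
  have hFT : (ℱ T : MeasurableSpace Ω) ≤ 𝔾h t := hGh t ▸ le_sup_left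
  have hFG : (ℱ t : MeasurableSpace Ω) ⊔ 𝒢 t ≤ 𝔾h t := hGh t ▸ sup_le_sup_right (ℱ.mono ht.2) _
  have hρ : ρ[ψ | (ℱ t : MeasurableSpace Ω) ⊔ 𝒢 t] =ᵐ[ρ] μ[ψ | ℱ t] :=
    (condExp_withDensity_ae_eq_condExp hFG (𝔾h.le t) (hηmart.integrable T)
      (ae_of_all _ fun ω => (hηpos T ω).le) (hηmart.condExp_ae_eq ht.2)
      (hηmeas t).stronglyMeasurable (hψ.mono hFT le_rfl).stronglyMeasurable (ae_of_all _ hC)).trans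
    ((withDensity_absolutelyContinuous _ _).ae_le (himm ψ hψ ⟨C, hC⟩ t ht))
  exact ⟨hρ, hρ.trans (condExp_ae_eq_of_le_of_condExp_ae_eq le_sup_left
    (sup_le (ℱ.le t) (𝒢.le t)) stronglyMeasurable_condExp hρ).symm⟩

/-- Change-of-measure preserves immersion: if `η` is a strictly positive `𝔾̂`-martingale
(`𝒢̂_t = ℱ_T ∨ 𝒢_t`) with `η_0 = 1` such that `η_t` is `ℱ_t ∨ 𝒢_t`-measurable for each `t`,
and `𝔽` is `ℚ`-immersed in `𝔽 ∨ 𝔾`, then under `ℙ = η_T ⬝ ℚ`, for every bounded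
`ℱ_T`-measurable `ψ` and `t ∈ [0,T]`,
`E_ℙ[ψ | ℱ_t ∨ 𝒢_t] = E_ℚ[ψ | ℱ_t] = E_ℙ[ψ | ℱ_t]` ℙ-a.s.; in particular `𝔽` is
`ℙ`-immersed in `𝔽 ∨ 𝔾`. -/
theorem immersion_preserved_under_change_of_measure
    {Ω : Type*} {m0 : MeasurableSpace Ω} (μ : Measure Ω) [IsProbabilityMeasure μ]
    (ℱ 𝒢 𝔾h : Filtration ℝ m0) (T : ℝ) (hT : 0 < T)
    (hGh : ∀ t : ℝ, (𝔾h t : MeasurableSpace Ω) = (ℱ T : MeasurableSpace Ω) ⊔ 𝒢 t)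
    (η : ℝ → Ω → ℝ)
    (hηpos : ∀ t ω, 0 < η t ω)
    (hη0 : ∀ ω, η 0 ω = 1)
    (hηmart : Martingale η 𝔾h μ)
    (hηmeas : ∀ t : ℝ, Measurable[(ℱ t : MeasurableSpace Ω) ⊔ 𝒢 t] (η t))
    -- 𝔽 is ℚ-immersed in 𝔽 ∨ 𝔾
    (himm : ∀ ψ : Ω → ℝ, Measurable[ℱ T] ψ → (∃ C, ∀ ω, |ψ ω| ≤ C) →
      ∀ t ∈ Set.Icc (0:ℝ) T,
        μ[ψ | (ℱ t : MeasurableSpace Ω) ⊔ 𝒢 t] =ᵐ[μ] μ[ψ | ℱ t]) :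
    ∀ ψ : Ω → ℝ, Measurable[ℱ T] ψ → (∃ C, ∀ ω, |ψ ω| ≤ C) →
      ∀ t ∈ Set.Icc (0:ℝ) T,
      (condExp ((ℱ t : MeasurableSpace Ω) ⊔ 𝒢 t)
          (μ.withDensity fun ω => ENNReal.ofReal (η T ω)) ψ
        =ᵐ[μ.withDensity fun ω => ENNReal.ofReal (η T ω)] condExp (ℱ t) μ ψ) ∧
      (condExp ((ℱ t : MeasurableSpace Ω) ⊔ 𝒢 t)
          (μ.withDensity fun ω => ENNReal.ofReal (η T ω)) ψ
        =ᵐ[μ.withDensity fun ω => ENNReal.ofReal (η T ω)]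
          condExp (ℱ t) (μ.withDensity fun ω => ENNReal.ofReal (η T ω)) ψ) :=
  immersion_preserved_under_change_of_measure_general μ ℱ 𝒢 𝔾h T hGh η hηpos hηmart hηmeas himm
end
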